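/- arXiv:1506.00072 — 5 statements merged into one kernel-verified Lean document; each statement's English description precedes it below -/
import Mathlib

section
/- Let A be a bounded self-adjoint operator, φ ∈ H, A_α = A + α(·,φ)φ, and define F(λ) = ((A-λI)⁻¹φ, φ), F_α(λ) = ((A_α-λI)⁻¹φ, φ) for λ ∈ ℂ \ ℝ. Then F_α = F/(1 + αF) (the Aronszajn–Krein formula). -/
/-!
If `T u = φ`, the rank-one perturbation `T' = T + c (ℓ ·) φ` sends `u` to `(1 + c ℓ(u)) φ`,
so applying a left inverse `R'` of `T'` gives `u = (1 + c ℓ(u)) R' φ`. The scalar cannot vanish,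
since otherwise `u = 0` and then `1 + c ℓ(u) = 1`. Taking `ℓ = (φ, ·)` and `u = (A - z)⁻¹ φ`
gives `F = (1 + α F) F_α`.
-/

open ContinuousLinearMap

section RankOnePerturbation

variable {𝕜 M : Type*} [Field 𝕜] [TopologicalSpace 𝕜] [AddCommGroup M] [Module 𝕜 M]
  [TopologicalSpace M] [ContinuousAdd M] [ContinuousSMul 𝕜 M]
  {T R' : M →L[𝕜] M} {ℓ : M →L[𝕜] 𝕜} {c : 𝕜} {φ u : M}

theorem add_smul_smulRight_apply_of_apply_eq (hu : T u = φ) :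
    (T + c • ℓ.smulRight φ) u = (1 + c * ℓ u) • φ := by
  simp only [add_apply, smul_apply, smulRight_apply, hu, smul_smul, add_smul, one_smul]

theorem eq_smul_apply_of_leftInverse_add_smul_smulRight (hu : T u = φ)
    (hR' : R' ∘L (T + c • ℓ.smulRight φ) = 1) :
    u = (1 + c * ℓ u) • R' φ := by
  have h := congr($hR' u)
  rw [comp_apply, add_smul_smulRight_apply_of_apply_eq hu, map_smul, one_apply_eq_self] at h
  exact h.symm

theorem one_add_mul_apply_ne_zero_of_leftInverse_add_smul_smulRight (hu : T u = φ)
    (hR' : R' ∘L (T + c • ℓ.smulRight φ) = 1) :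
    1 + c * ℓ u ≠ 0 := by
  intro h
  have hu0 : u = 0 := by
    rw [eq_smul_apply_of_leftInverse_add_smul_smulRight hu hR', h, zero_smul]
  rw [hu0, map_zero, mul_zero, add_zero] at h
  exact one_ne_zero h

theorem apply_leftInverse_add_smul_smulRight_eq_div (hu : T u = φ)
    (hR' : R' ∘L (T + c • ℓ.smulRight φ) = 1) :
    ℓ (R' φ) = ℓ u / (1 + c * ℓ u) := by
  rw [eq_div_iff (one_add_mul_apply_ne_zero_of_leftInverse_add_smul_smulRight hu hR'), mul_comm,
    ← smul_eq_mul, ← map_smul, ← eq_smul_apply_of_leftInverse_add_smul_smulRight hu hR']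

end RankOnePerturbation

theorem stmt2_general {H : Type*} [NormedAddCommGroup H] [InnerProductSpace ℂ H]
    (A : H →L[ℂ] H) (φ : H) (α : ℝ)
    (Aα : H →L[ℂ] H) (hAα : Aα = A + (α : ℂ) • (innerSL ℂ φ).smulRight φ)
    (z : ℂ)
    (R Rα : H →L[ℂ] H)
    (hR1 : (A - z • 1) ∘L R = 1)
    (hRα2 : Rα ∘L (Aα - z • 1) = 1)
    (F Fα : ℂ) (hF : F = (inner ℂ φ (R φ) : ℂ)) (hFα : Fα = (inner ℂ φ (Rα φ) : ℂ)) :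
    Fα = F / (1 + (α : ℂ) * F) := by
  have hRφ : (A - z • 1) (R φ) = φ := by simpa using congr($hR1 φ)
  have hshift : Aα - z • 1 = (A - z • 1) + (α : ℂ) • (innerSL ℂ φ).smulRight φ := by
    rw [hAα]; abel
  rw [hshift] at hRα2
  subst hF hFα
  exact apply_leftInverse_add_smul_smulRight_eq_div hRφ hRα2

/-- The Aronszajn–Krein formula: with `F(λ) = ((A-λ)⁻¹φ, φ)` and
`F_α(λ) = ((A_α-λ)⁻¹φ, φ)` for `A_α = A + α(·, φ)φ`, one has `F_α = F/(1 + αF)`. -/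
theorem stmt2 {H : Type*} [NormedAddCommGroup H] [InnerProductSpace ℂ H] [CompleteSpace H]
    (A : H →L[ℂ] H) (hA : IsSelfAdjoint A) (φ : H) (α : ℝ)
    (Aα : H →L[ℂ] H) (hAα : Aα = A + (α : ℂ) • (innerSL ℂ φ).smulRight φ)
    (z : ℂ) (hz : z.im ≠ 0)
    (R Rα : H →L[ℂ] H)
    (hR1 : (A - z • 1) ∘L R = 1) (hR2 : R ∘L (A - z • 1) = 1)
    (hRα1 : (Aα - z • 1) ∘L Rα = 1) (hRα2 : Rα ∘L (Aα - z • 1) = 1)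
    (F Fα : ℂ) (hF : F = (inner ℂ φ (R φ) : ℂ)) (hFα : Fα = (inner ℂ φ (Rα φ) : ℂ)) :
    Fα = F / (1 + (α : ℂ) * F) :=
  stmt2_general A φ α Aα hAα z R Rα hR1 hRα2 F Fα hF hFα
end

section
/- Let U be a unitary operator on a Hilbert space H, b ∈ H with ‖b‖ = 1, and for γ ∈ ℂ define U_γ := U + (γ-1)(·, U*b)b. Then U_γ is unitary if and only if |γ| = 1, and U_γ is a contraction (‖U_γ‖ ≤ 1) whenever |γ| ≤ 1. -/
/-!
With `c = U* b` we have `U c = b`, so `U_γ = U (1 + (γ - 1) P)` where `P = (·, c) c` is the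
orthogonal projection onto `ℂ c`. For any star projection `P`,
`(1 + (γ - 1) P)* (1 + (γ - 1) P) = 1 + (|γ|² - 1) P = (1 - P) + |γ|² P`, and the same holds for the
product in the other order. The first expression equals `1` exactly when `|γ| = 1` (as `P ≠ 0`),
and when `|γ| ≤ 1` the second is a convex combination of the projections `1 - P` and `1`, hence
of norm at most `1`; the C*-identity then bounds `‖1 + (γ - 1) P‖`, and multiplying by the unitary
`U` changes neither unitarity nor norm.
-/

open ContinuousLinearMap InnerProductSpace

theorem Unitary.mul_mem_cancel_left {R : Type*} [Monoid R] [StarMul R] {u x : R}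
    (hu : u ∈ unitary R) : u * x ∈ unitary R ↔ x ∈ unitary R := by
  refine ⟨fun h => ?_, Submonoid.mul_mem _ hu⟩
  simpa [← mul_assoc, Unitary.star_mul_self_of_mem hu] using
    Submonoid.mul_mem _ (Unitary.star_mem hu) h

theorem IsIdempotentElem.one_add_smul_mul_one_add_smul {R A : Type*} [CommSemiring R] [Semiring A]
    [Algebra R A] {p : A} (hp : IsIdempotentElem p) (α β : R) :
    (1 + α • p) * (1 + β • p) = 1 + (α + β + α * β) • p := by
  simp only [add_mul, mul_add, one_mul, mul_one, smul_mul_smul, hp.eq, add_smul]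
  abel

namespace IsStarProjection

variable {A : Type*} {p : A} {γ : ℂ}

section Algebraic

variable [Ring A] [StarRing A] [Algebra ℂ A] [StarModule ℂ A]

theorem star_one_add_smul (hp : IsStarProjection p) (α : ℂ) :
    star (1 + α • p) = 1 + star α • p := by
  rw [star_add, star_one, star_smul, hp.isSelfAdjoint.star_eq]

theorem star_one_add_smul_mul_self (hp : IsStarProjection p) (γ : ℂ) :
    star (1 + (γ - 1) • p) * (1 + (γ - 1) • p) = 1 + ((‖γ‖ ^ 2 - 1 : ℝ) : ℂ) • p := by
  rw [hp.star_one_add_smul, hp.isIdempotentElem.one_add_smul_mul_one_add_smul]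
  congr 2
  rw [star_sub, star_one, Complex.star_def]
  push_cast
  linear_combination Complex.conj_mul' γ

theorem one_add_smul_mul_star_self (hp : IsStarProjection p) (γ : ℂ) :
    (1 + (γ - 1) • p) * star (1 + (γ - 1) • p) = 1 + ((‖γ‖ ^ 2 - 1 : ℝ) : ℂ) • p := by
  rw [← hp.star_one_add_smul_mul_self γ, hp.star_one_add_smul,
    hp.isIdempotentElem.one_add_smul_mul_one_add_smul,
    hp.isIdempotentElem.one_add_smul_mul_one_add_smul, add_comm (γ - 1), mul_comm]

theorem one_add_smul_mem_unitary_iff (hp : IsStarProjection p) (hp0 : p ≠ 0) :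
    1 + (γ - 1) • p ∈ unitary A ↔ ‖γ‖ = 1 := by
  rw [Unitary.mem_iff, hp.star_one_add_smul_mul_self, hp.one_add_smul_mul_star_self, and_self,
    add_eq_left, smul_eq_zero_iff_left hp0, Complex.ofReal_eq_zero, sub_eq_zero,
    pow_eq_one_iff_of_nonneg (norm_nonneg γ) two_ne_zero]

end Algebraic

theorem norm_one_add_smul_le_one [NormedRing A] [StarRing A] [CStarRing A] [NormedAlgebra ℂ A]
    [StarModule ℂ A] (hp : IsStarProjection p) (hγ : ‖γ‖ ≤ 1) : ‖1 + (γ - 1) • p‖ ≤ 1 := by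
  set t := ‖γ‖ ^ 2
  have ht0 : 0 ≤ t := by positivity
  have ht1 : t ≤ 1 := pow_le_one₀ (norm_nonneg γ) hγ
  have hsplit : 1 + ((t - 1 : ℝ) : ℂ) • p = (t : ℂ) • 1 + ((1 - t : ℝ) : ℂ) • (1 - p) := by
    push_cast; module
  have h : ‖star (1 + (γ - 1) • p) * (1 + (γ - 1) • p)‖ ≤ 1 := calc
    _ = ‖(t : ℂ) • (1 : A) + ((1 - t : ℝ) : ℂ) • (1 - p)‖ := by
      rw [hp.star_one_add_smul_mul_self, hsplit]
    _ ≤ t * ‖(1 : A)‖ + (1 - t) * ‖1 - p‖ := by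
      refine (norm_add_le _ _).trans_eq ?_
      rw [norm_smul, norm_smul, Complex.norm_of_nonneg ht0, Complex.norm_of_nonneg (by linarith)]
    _ ≤ t * 1 + (1 - t) * 1 :=
      add_le_add (mul_le_mul_of_nonneg_left (IsStarProjection.norm_le _ (.one A)) ht0)
        (mul_le_mul_of_nonneg_left (hp.one_sub.norm_le _) (by linarith))
    _ = 1 := by ring
  rw [CStarRing.norm_star_mul_self] at h
  nlinarith [norm_nonneg (1 + (γ - 1) • p)]

end IsStarProjection

/-- For a unitary `U`, a unit vector `b` and `U_γ = U + (γ-1)(·, U*b)b`: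
`U_γ` is unitary iff `|γ| = 1`, and `U_γ` is a contraction whenever `|γ| ≤ 1`. -/
theorem stmt4 {H : Type*} [NormedAddCommGroup H] [InnerProductSpace ℂ H] [CompleteSpace H]
    (U : H →L[ℂ] H) (hU : U ∈ unitary (H →L[ℂ] H))
    (b : H) (hb : ‖b‖ = 1) (γ : ℂ)
    (Uγ : H →L[ℂ] H)
    (hUγ : Uγ = U + (γ - 1) • (innerSL ℂ (ContinuousLinearMap.adjoint U b)).smulRight b) :
    (Uγ ∈ unitary (H →L[ℂ] H) ↔ ‖γ‖ = 1) ∧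
    (‖γ‖ ≤ 1 → ‖Uγ‖ ≤ 1) := by
  have hUc : U (adjoint U b) = b := by
    simpa [star_eq_adjoint] using congr($(Unitary.mul_star_self_of_mem hU) b)
  have hc : ‖adjoint U b‖ = 1 := by
    rw [← hb, ← star_eq_adjoint]; exact norm_map_of_mem_unitary (Unitary.star_mem hU) b
  set c := adjoint U b
  have hp : IsStarProjection (rankOne ℂ c c) := isStarProjection_rankOne_self hc
  have hc0 : c ≠ 0 := ne_zero_of_norm_ne_zero (hc ▸ one_ne_zero)
  have hp0 : rankOne ℂ c c ≠ 0 := rankOne_ne_zero hc0 hc0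
  have hfactor : Uγ = U * (1 + (γ - 1) • rankOne ℂ c c) := by
    rw [hUγ, mul_add, mul_one, mul_smul_comm, mul_def, comp_rankOne, hUc, rankOne_def]
  rw [hfactor]
  exact ⟨(Unitary.mul_mem_cancel_left hU).trans (hp.one_add_smul_mem_unitary_iff hp0),
    fun h => (CStarRing.norm_mem_unitary_mul _ hU).trans_le (hp.norm_one_add_smul_le_one h)⟩
end

section
/- Let μ be a finite Borel measure on the unit circle 𝕋, let U = M_ξ be multiplication by the independent variable on L²(μ), b ≡ 1, b₁ = U*b, and U_α = U + (α-1)(·, b₁)b for α ∈ 𝕋. Suppose V : L²(μ) → L²(μ_α) is unitary with V1 = 1 and V U_α = M_z V. Then for every n ≥ 0, (V ξⁿ)(z) = zⁿ + (1-α)∫_𝕋 (ξⁿ - zⁿ)/(1 - ξ̄z) dμ(ξ) for μ_α-a.e. z ∈ 𝕋. -/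
open MeasureTheory ComplexConjugate ContinuousLinearMap

open scoped InnerProductSpace

/-!
Write `eₘ` for the monomial `ξᵐ` in `L²(μ)` and `cₘ = ∫ ξᵐ dμ`. Since `⟪b₁, eₘ⟫ = cₘ₊₁`,
the perturbed operator acts on monomials by `U_α eₘ = eₘ₊₁ + (α - 1) cₘ₊₁ · 1`. Applying `V`
and using `V U_α = M_z V`, `V 1 = 1` gives the recursion
`V eₘ₊₁ = z · V eₘ - (α - 1) cₘ₊₁`, starting from `V e₀ = 1`. The right-hand side of the
theorem obeys the same recursion, because the kernel `Kₙ(ξ, z) = ξ ∑_{k<n} ξᵏ zⁿ⁻¹⁻ᵏ`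
satisfies `Kₙ₊₁(ξ, z) = ξⁿ⁺¹ + z Kₙ(ξ, z)`.
-/

local notation "𝕋" => Metric.sphere (0 : ℂ) 1

/-- On `𝕋` this is `(ξⁿ - zⁿ) / (1 - ξ̄ z)`, since `1 - ξ̄ z = ξ̄ (ξ - z)`. -/
def geomKernel {R : Type*} [CommRing R] (n : ℕ) (ξ z : R) : R :=
  ξ * ∑ k ∈ Finset.range n, ξ ^ k * z ^ (n - 1 - k)

section geomKernel

variable {R : Type*}

@[simp]
lemma geomKernel_zero [CommRing R] (ξ z : R) : geomKernel 0 ξ z = 0 := by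
  simp [geomKernel]

lemma geomKernel_succ [CommRing R] (n : ℕ) (ξ z : R) :
    geomKernel (n + 1) ξ z = ξ ^ (n + 1) + z * geomKernel n ξ z := by
  simp only [geomKernel, Nat.add_sub_cancel, geom_sum₂_succ_eq, pow_succ']
  ring

lemma norm_geomKernel_le [NormedCommRing R] [NormOneClass R] (n : ℕ) {ξ z : R}
    (hξ : ‖ξ‖ ≤ 1) (hz : ‖z‖ ≤ 1) : ‖geomKernel n ξ z‖ ≤ n := by
  have hterm : ∀ k j : ℕ, ‖ξ ^ k * z ^ j‖ ≤ 1 := fun k j =>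
    calc ‖ξ ^ k * z ^ j‖ ≤ ‖ξ‖ ^ k * ‖z‖ ^ j :=
          (norm_mul_le _ _).trans (mul_le_mul (norm_pow_le _ _) (norm_pow_le _ _)
            (norm_nonneg _) (by positivity))
      _ ≤ 1 := mul_le_one₀ (pow_le_one₀ (norm_nonneg _) hξ) (by positivity)
          (pow_le_one₀ (norm_nonneg _) hz)
  calc ‖geomKernel n ξ z‖ ≤ ‖ξ‖ * ∑ k ∈ Finset.range n, ‖ξ ^ k * z ^ (n - 1 - k)‖ :=
        (norm_mul_le _ _).trans (by gcongr; exact norm_sum_le _ _)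
    _ ≤ 1 * ∑ _k ∈ Finset.range n, (1 : ℝ) := by
        gcongr with k
        exact hterm _ _
    _ = n := by simp

lemma continuous_geomKernel_left [NormedCommRing R] (n : ℕ) (z : R) :
    Continuous fun ξ : R => geomKernel n ξ z := by
  unfold geomKernel
  fun_prop

end geomKernel

section Circle

variable (μ : Measure 𝕋)

noncomputable def reprFun (α : ℂ) (n : ℕ) (z : ℂ) : ℂ :=
  z ^ n + (1 - α) * ∫ ξ : 𝕋, geomKernel n (ξ : ℂ) z ∂μ

@[simp]
lemma reprFun_zero (α z : ℂ) : reprFun μ α 0 z = 1 := by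
  simp [reprFun]

variable [IsFiniteMeasure μ]

lemma integrable_geomKernel (n : ℕ) {z : ℂ} (hz : ‖z‖ ≤ 1) :
    Integrable (fun ξ : 𝕋 => geomKernel n (ξ : ℂ) z) μ :=
  .of_bound ((continuous_geomKernel_left n z).comp continuous_subtype_val).aestronglyMeasurable n
    (.of_forall fun ξ => norm_geomKernel_le n (norm_eq_of_mem_sphere ξ).le hz)

lemma memLp_pow_circle (p : ENNReal) (m : ℕ) : MemLp (fun ξ : 𝕋 => (ξ : ℂ) ^ m) p μ :=
  .of_bound (continuous_subtype_val.pow m).aestronglyMeasurable 1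
    (.of_forall fun ξ => by simp [norm_eq_of_mem_sphere ξ])

lemma integral_geomKernel_succ (n : ℕ) {z : ℂ} (hz : ‖z‖ ≤ 1) :
    ∫ ξ : 𝕋, geomKernel (n + 1) (ξ : ℂ) z ∂μ =
      ∫ ξ : 𝕋, (ξ : ℂ) ^ (n + 1) ∂μ + z * ∫ ξ : 𝕋, geomKernel n (ξ : ℂ) z ∂μ := by
  simp only [geomKernel_succ]
  rw [integral_add (memLp_one_iff_integrable.mp (memLp_pow_circle μ 1 (n + 1)))
    ((integrable_geomKernel μ n hz).const_mul z), integral_const_mul]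

noncomputable def monomialLp (m : ℕ) : Lp ℂ 2 μ :=
  (memLp_pow_circle μ 2 m).toLp _

lemma coeFn_monomialLp (m : ℕ) : ⇑(monomialLp μ m) =ᵐ[μ] fun ξ : 𝕋 => (ξ : ℂ) ^ m :=
  (memLp_pow_circle μ 2 m).coeFn_toLp

lemma inner_monomialLp {b₁ : Lp ℂ 2 μ} (hb₁ : ⇑b₁ =ᵐ[μ] fun ξ : 𝕋 => conj (ξ : ℂ)) (m : ℕ) :
    ⟪b₁, monomialLp μ m⟫_ℂ = ∫ ξ : 𝕋, (ξ : ℂ) ^ (m + 1) ∂μ := by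
  rw [L2.inner_def]
  refine integral_congr_ae ?_
  filter_upwards [hb₁, coeFn_monomialLp μ m] with ξ hb hξ
  simp [hb, hξ, pow_succ', mul_comm]

lemma mul_monomialLp {Mξ : Lp ℂ 2 μ →L[ℂ] Lp ℂ 2 μ}
    (hMξ : ∀ f : Lp ℂ 2 μ, ⇑(Mξ f) =ᵐ[μ] fun ξ => (ξ : ℂ) * f ξ) (m : ℕ) :
    Mξ (monomialLp μ m) = monomialLp μ (m + 1) := by
  refine Lp.ext ?_
  filter_upwards [hMξ (monomialLp μ m), coeFn_monomialLp μ m, coeFn_monomialLp μ (m + 1)]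
    with ξ hM hm hm'
  rw [hM, hm, hm', pow_succ']

lemma rankOnePerturbation_monomialLp {Mξ : Lp ℂ 2 μ →L[ℂ] Lp ℂ 2 μ}
    (hMξ : ∀ f : Lp ℂ 2 μ, ⇑(Mξ f) =ᵐ[μ] fun ξ => (ξ : ℂ) * f ξ) {b₁ : Lp ℂ 2 μ}
    (hb₁ : ⇑b₁ =ᵐ[μ] fun ξ : 𝕋 => conj (ξ : ℂ)) (one : Lp ℂ 2 μ) (α : ℂ) (m : ℕ) :
    (Mξ + (α - 1) • (innerSL ℂ b₁).smulRight one) (monomialLp μ m) =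
      monomialLp μ (m + 1) + ((α - 1) * ∫ ξ : 𝕋, (ξ : ℂ) ^ (m + 1) ∂μ) • one := by
  simp only [add_apply, smul_apply, smulRight_apply, innerSL_apply_apply,
    inner_monomialLp μ hb₁, mul_monomialLp μ hMξ, smul_smul]

lemma reprFun_succ (α : ℂ) (n : ℕ) {z : ℂ} (hz : ‖z‖ ≤ 1) :
    reprFun μ α (n + 1) z = z * reprFun μ α n z - (α - 1) * ∫ ξ : 𝕋, (ξ : ℂ) ^ (n + 1) ∂μ := by
  rw [reprFun, reprFun, integral_geomKernel_succ μ n hz]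
  ring

lemma ae_eq_reprFun_succ {ν : Measure 𝕋} {Mz : Lp ℂ 2 ν →L[ℂ] Lp ℂ 2 ν}
    (hMz : ∀ f : Lp ℂ 2 ν, ⇑(Mz f) =ᵐ[ν] fun z => (z : ℂ) * f z)
    {one : Lp ℂ 2 ν} (h1 : ⇑one =ᵐ[ν] fun _ => (1 : ℂ)) (α : ℂ) (n : ℕ) {g : Lp ℂ 2 ν}
    (hg : ⇑g =ᵐ[ν] fun z : 𝕋 => reprFun μ α n z) :
    ⇑(Mz g - ((α - 1) * ∫ ξ : 𝕋, (ξ : ℂ) ^ (n + 1) ∂μ) • one) =ᵐ[ν]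
      fun z : 𝕋 => reprFun μ α (n + 1) z := by
  filter_upwards [Lp.coeFn_sub (Mz g) _,
    Lp.coeFn_smul ((α - 1) * ∫ ξ : 𝕋, (ξ : ℂ) ^ (n + 1) ∂μ) one, hMz g, hg, h1]
    with z hsub hsmul hM hgz h1z
  rw [hsub, Pi.sub_apply, hsmul, Pi.smul_apply, hM, hgz, h1z, smul_eq_mul, mul_one,
    reprFun_succ μ α n (norm_eq_of_mem_sphere z).le]

end Circle

theorem stmt11_general
    (μ μα : Measure (Metric.sphere (0 : ℂ) 1))
    [IsFiniteMeasure μ]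
    (α : ℂ)
    (Mξ : Lp ℂ 2 μ →L[ℂ] Lp ℂ 2 μ)
    (hMξ : ∀ f : Lp ℂ 2 μ, ⇑(Mξ f) =ᵐ[μ] fun ξ => (ξ : ℂ) * f ξ)
    (Mz : Lp ℂ 2 μα →L[ℂ] Lp ℂ 2 μα)
    (hMz : ∀ f : Lp ℂ 2 μα, ⇑(Mz f) =ᵐ[μα] fun z => (z : ℂ) * f z)
    (oneμ : Lp ℂ 2 μ) (h1μ : ⇑oneμ =ᵐ[μ] fun _ => (1 : ℂ))
    (oneα : Lp ℂ 2 μα) (h1α : ⇑oneα =ᵐ[μα] fun _ => (1 : ℂ))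
    (b1 : Lp ℂ 2 μ) (hb1 : ⇑b1 =ᵐ[μ] fun ξ => conj (ξ : ℂ))
    (Uα : Lp ℂ 2 μ →L[ℂ] Lp ℂ 2 μ)
    (hUα : Uα = Mξ + (α - 1) • (innerSL ℂ b1).smulRight oneμ)
    (V : Lp ℂ 2 μ ≃ₗᵢ[ℂ] Lp ℂ 2 μα)
    (hV1 : V oneμ = oneα)
    (hVint : ∀ f : Lp ℂ 2 μ, V (Uα f) = Mz (V f))
    (n : ℕ) (ξn : Lp ℂ 2 μ) (hξn : ⇑ξn =ᵐ[μ] fun ξ => (ξ : ℂ) ^ n) :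
    ⇑(V ξn) =ᵐ[μα] fun z => (z : ℂ) ^ n +
      (1 - α) * ∫ ξ, (ξ : ℂ) * ∑ k ∈ Finset.range n, (ξ : ℂ) ^ k * (z : ℂ) ^ (n - 1 - k) ∂μ := by
  have hstep : ∀ m, V (monomialLp μ (m + 1)) =
      Mz (V (monomialLp μ m)) - ((α - 1) * ∫ ξ : 𝕋, (ξ : ℂ) ^ (m + 1) ∂μ) • oneα := fun m => by
    rw [← hVint, ← hV1, ← map_smul, ← map_sub, hUα, rankOnePerturbation_monomialLp μ hMξ hb1,
      add_sub_cancel_right]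
  have hrepr : ∀ m, ⇑(V (monomialLp μ m)) =ᵐ[μα] fun z : 𝕋 => reprFun μ α m z := by
    intro m
    induction m with
    | zero =>
      have h0 : monomialLp μ 0 = oneμ :=
        Lp.ext ((coeFn_monomialLp μ 0).trans (by simpa using h1μ.symm))
      simpa [h0, hV1] using h1α
    | succ m ih => rw [hstep]; exact ae_eq_reprFun_succ μ hMz h1α α m ih
  rw [Lp.ext (hξn.trans (coeFn_monomialLp μ n).symm)]
  exact hrepr n

/-- Representation theorem for rank one unitary perturbations of a unitary operator:
if `U = M_ξ` on `L²(μ)` over `𝕋`, `b ≡ 1`, `b₁ = U*b`, `U_α = U + (α-1)(·, b₁)b`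
(`|α| = 1`), and `V : L²(μ) → L²(μ_α)` is unitary with `V1 = 1` and `V U_α = M_z V`,
then `(V ξⁿ)(z) = zⁿ + (1-α)∫ (ξⁿ - zⁿ)/(1 - ξ̄z) dμ(ξ)` for `μ_α`-a.e. `z`,
the quotient being understood via the finite geometric sum. -/
theorem stmt11
    (μ μα : Measure (Metric.sphere (0 : ℂ) 1))
    [IsFiniteMeasure μ] [IsFiniteMeasure μα]
    (α : ℂ) (hα : ‖α‖ = 1)
    (Mξ : Lp ℂ 2 μ →L[ℂ] Lp ℂ 2 μ)
    (hMξ : ∀ f : Lp ℂ 2 μ, ⇑(Mξ f) =ᵐ[μ] fun ξ => (ξ : ℂ) * f ξ)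
    (Mz : Lp ℂ 2 μα →L[ℂ] Lp ℂ 2 μα)
    (hMz : ∀ f : Lp ℂ 2 μα, ⇑(Mz f) =ᵐ[μα] fun z => (z : ℂ) * f z)
    (oneμ : Lp ℂ 2 μ) (h1μ : ⇑oneμ =ᵐ[μ] fun _ => (1 : ℂ))
    (oneα : Lp ℂ 2 μα) (h1α : ⇑oneα =ᵐ[μα] fun _ => (1 : ℂ))
    (b1 : Lp ℂ 2 μ) (hb1 : ⇑b1 =ᵐ[μ] fun ξ => conj (ξ : ℂ))
    (Uα : Lp ℂ 2 μ →L[ℂ] Lp ℂ 2 μ)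
    (hUα : Uα = Mξ + (α - 1) • (innerSL ℂ b1).smulRight oneμ)
    (V : Lp ℂ 2 μ ≃ₗᵢ[ℂ] Lp ℂ 2 μα)
    (hV1 : V oneμ = oneα)
    (hVint : ∀ f : Lp ℂ 2 μ, V (Uα f) = Mz (V f))
    (n : ℕ) (ξn : Lp ℂ 2 μ) (hξn : ⇑ξn =ᵐ[μ] fun ξ => (ξ : ℂ) ^ n) :
    ⇑(V ξn) =ᵐ[μα] fun z => (z : ℂ) ^ n +
      (1 - α) * ∫ ξ, (ξ : ℂ) * ∑ k ∈ Finset.range n, (ξ : ℂ) ^ k * (z : ℂ) ^ (n - 1 - k) ∂μ :=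
  stmt11_general μ μα α Mξ hMξ Mz hMz oneμ h1μ oneα h1α b1 hb1 Uα hUα V hV1 hVint n ξn hξn
end

section
/- Let A be a contraction on a Hilbert space H (‖A‖ ≤ 1). Define the characteristic function θ(z) = (-A + z D_{A*}(I - zA*)⁻¹ D_A)|_{𝔇} for z ∈ 𝔻, where D_A = (I-A*A)^{1/2}, D_{A*} = (I-AA*)^{1/2}, 𝔇 = closure of Ran D_A, 𝔇_* = closure of Ran D_{A*}. Then A·𝔇 ⊆ 𝔇_*, and for each z ∈ 𝔻 the operator θ(z) maps 𝔇 into 𝔇_* and is a contraction: ‖θ(z)x‖ ≤ ‖x‖ for all x ∈ 𝔇. -/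
/-!
Passing to square roots in `A (I - A*A) = (I - AA*) A` by the continuous functional calculus
gives `A D_A = D_{A*} A`, so `A` maps `ran D_A` into `ran D_{A*}` and hence `𝔇` into `𝔇_*`.
For the contraction property, with `y = (I - zA*)⁻¹ D_A x` the defect identities
`‖x‖² = ‖Ax‖² + ‖D_A x‖²` and `‖D_{A*} y‖² = ‖y‖² - ‖A* y‖²` combine into
`‖x‖² - ‖θ(z) x‖² = (1 - |z|²) ‖y‖²`.
-/

open ContinuousLinearMap
open scoped InnerProductSpace ComplexConjugate

section FunctionalCalculus

variable {A : Type*}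

theorem mul_cfc_eq_cfc_mul [Ring A] [StarRing A] [Algebra ℝ A] [TopologicalSpace A]
    [ContinuousFunctionalCalculus ℝ A IsSelfAdjoint] [IsTopologicalRing A] [T2Space A]
    {a b w : A} (ha : IsSelfAdjoint a) (hb : IsSelfAdjoint b) (h : w * a = b * w) (f : ℝ → ℝ)
    (hf : ContinuousOn f (spectrum ℝ a ∪ spectrum ℝ b) := by cfc_cont_tac) :
    w * cfc f a = cfc f b * w := by
  set s := spectrum ℝ a ∪ spectrum ℝ b
  have : CompactSpace s := isCompact_iff_compactSpace.mp
    ((ContinuousFunctionalCalculus.isCompact_spectrum a).union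
      (ContinuousFunctionalCalculus.isCompact_spectrum b))
  suffices key : ∀ g : C(s, ℝ), w * cfcHomSuperset ha Set.subset_union_left g =
      cfcHomSuperset hb Set.subset_union_right g * w by
    rw [cfc_apply f a ha (hf.mono Set.subset_union_left),
      cfc_apply f b hb (hf.mono Set.subset_union_right)]
    exact key ⟨s.domRestrict f, hf.domRestrict⟩
  intro g
  induction g using ContinuousMap.induction_on_of_compact with
  | const r =>
    change w * cfcHomSuperset ha _ (algebraMap ℝ _ r) = cfcHomSuperset hb _ (algebraMap ℝ _ r) * w
    rw [AlgHomClass.commutes, AlgHomClass.commutes, Algebra.commutes]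
  | id => rwa [cfcHomSuperset_id, cfcHomSuperset_id]
  | star_id =>
    rwa [map_star, map_star, cfcHomSuperset_id, cfcHomSuperset_id, ha.star_eq, hb.star_eq]
  | add f g hf hg => rw [map_add, map_add, mul_add, add_mul, hf, hg]
  | mul f g hf hg => rw [map_mul, map_mul, ← mul_assoc, hf, mul_assoc, hg, mul_assoc]
  | frequently f hf =>
    have hclosed : IsClosed {g : C(s, ℝ) | w * cfcHomSuperset ha Set.subset_union_left g =
        cfcHomSuperset hb Set.subset_union_right g * w} :=
      isClosed_eq (continuous_const.mul (cfcHomSuperset_continuous ..))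
        ((cfcHomSuperset_continuous ..).mul continuous_const)
    exact hclosed.closure_subset (mem_closure_iff_frequently.mpr hf)

variable [CStarAlgebra A] [PartialOrder A] [StarOrderedRing A]

theorem cfc_sqrt_eq_of_mul_self_eq {a b : A} (hb : 0 ≤ b) (h : b * b = a) :
    cfc Real.sqrt a = b := by
  have ha : 0 ≤ a := by rw [← h]; exact hb.isSelfAdjoint.mul_self_nonneg
  rw [← CFC.sqrt_unique h hb, CFC.sqrt_eq_cfc, cfc_nnreal_eq_real _ a ha]
  exact cfc_congr fun x _ => by rw [Real.sqrt]

theorem mul_defect_eq_defect_mul {a p q : A} (hp : 0 ≤ p) (hq : 0 ≤ q)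
    (hp2 : p * p = 1 - star a * a) (hq2 : q * q = 1 - a * star a) : a * p = q * a := by
  rw [← cfc_sqrt_eq_of_mul_self_eq hp hp2, ← cfc_sqrt_eq_of_mul_self_eq hq hq2]
  refine mul_cfc_eq_cfc_mul (.sub (.one _) (.star_mul_self a)) (.sub (.one _) (.mul_star_self a))
    ?_ Real.sqrt
  noncomm_ring

end FunctionalCalculus

theorem ContinuousLinearMap.apply_mem_closure_range_of_comp_eq {R M : Type*} [Semiring R]
    [TopologicalSpace M] [AddCommMonoid M] [Module R M] [ContinuousAdd M] [ContinuousConstSMul R M]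
    {f g h : M →L[R] M} (hfg : f ∘L g = h ∘L f) {x : M}
    (hx : x ∈ (LinearMap.range (g : M →ₗ[R] M)).topologicalClosure) :
    f x ∈ (LinearMap.range (h : M →ₗ[R] M)).topologicalClosure := by
  refine map_mem_closure f.continuous hx ?_
  rintro _ ⟨y, rfl⟩
  exact ⟨f y, (congr($hfg y) : f (g y) = h (f y)).symm⟩

section InnerProductSpace

variable {𝕜 E : Type*} [RCLike 𝕜] [NormedAddCommGroup E] [InnerProductSpace 𝕜 E] [CompleteSpace E]

theorem ContinuousLinearMap.nonneg_of_re_inner_nonneg {T : E →L[𝕜] E} (hT : IsSelfAdjoint T)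
    (h : ∀ x, 0 ≤ RCLike.re ⟪x, T x⟫_𝕜) : 0 ≤ T := by
  rw [nonneg_iff_isPositive, isPositive_def']
  exact ⟨hT, fun x => by simpa [reApplyInnerSelf, inner_re_symm] using h x⟩

theorem IsSelfAdjoint.norm_sq_apply_of_comp_self_eq {D T : E →L[𝕜] E} (hD : IsSelfAdjoint D)
    (h : D ∘L D = 1 - adjoint T ∘L T) (x : E) : ‖D x‖ ^ 2 = ‖x‖ ^ 2 - ‖T x‖ ^ 2 := by
  have hDD : ⟪D x, D x⟫_𝕜 = ⟪x, x⟫_𝕜 - ⟪T x, T x⟫_𝕜 := by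
    calc ⟪D x, D x⟫_𝕜 = ⟪x, (D ∘L D) x⟫_𝕜 := hD.isSymmetric x (D x)
      _ = ⟪x, x⟫_𝕜 - ⟪T x, T x⟫_𝕜 := by
        rw [h, sub_apply, one_apply_eq_self, inner_sub_right, comp_apply, adjoint_inner_right]
  rw [inner_self_eq_norm_sq_to_K, inner_self_eq_norm_sq_to_K, inner_self_eq_norm_sq_to_K] at hDD
  exact_mod_cast hDD

end InnerProductSpace

section CharacteristicFunction

variable {E : Type*} [NormedAddCommGroup E] [InnerProductSpace ℂ E]

-- The algebraic core of the defect identity, for `a = A x`, `s = D_{A*} y`, `w = A* y`.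
theorem norm_sq_add_norm_sq_sub_norm_sq_eq {a s y w : E} {z : ℂ}
    (has : ⟪a, s⟫_ℂ = ⟪y - z • w, w⟫_ℂ) (hs : ‖s‖ ^ 2 = ‖y‖ ^ 2 - ‖w‖ ^ 2) :
    ‖a‖ ^ 2 + ‖y - z • w‖ ^ 2 - ‖-a + z • s‖ ^ 2 = (1 - ‖z‖ ^ 2) * ‖y‖ ^ 2 := by
  have hre : (conj z * ⟪s, a⟫_ℂ).re = (z * ⟪y, w⟫_ℂ).re - ‖z‖ ^ 2 * ‖w‖ ^ 2 := by
    rw [← inner_conj_symm, ← map_mul, Complex.conj_re, has, inner_sub_left, inner_smul_left,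
      inner_self_eq_norm_sq_to_K, mul_sub, ← mul_assoc, Complex.mul_conj,
      Complex.normSq_eq_norm_sq, Complex.sub_re]
    simp [← Complex.ofReal_pow]
  rw [neg_add_eq_sub, @norm_sub_sq ℂ, @norm_sub_sq ℂ, inner_smul_left, inner_smul_right,
    norm_smul, norm_smul, mul_pow, mul_pow]
  simp only [RCLike.re_to_complex]
  rw [hre, hs]
  ring

variable [CompleteSpace E] {A DA DAs R : E →L[ℂ] E} {z : ℂ}

theorem norm_sq_sub_norm_sq_characteristic_apply
    (hDAsa : IsSelfAdjoint DA) (hDAsq : DA ∘L DA = 1 - adjoint A ∘L A)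
    (hDAssa : IsSelfAdjoint DAs) (hDAssq : DAs ∘L DAs = 1 - A ∘L adjoint A)
    (hintertwine : A ∘L DA = DAs ∘L A) (hR : (1 - z • adjoint A) ∘L R = 1) (x : E) :
    ‖x‖ ^ 2 - ‖(-A + z • (DAs ∘L R ∘L DA)) x‖ ^ 2 = (1 - ‖z‖ ^ 2) * ‖R (DA x)‖ ^ 2 := by
  set y := R (DA x)
  set w := adjoint A y
  have hy : DA x = y - z • w := by simpa using congr($hR (DA x)).symm
  have hinner : ⟪A x, DAs y⟫_ℂ = ⟪DA x, w⟫_ℂ :=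
    calc ⟪A x, DAs y⟫_ℂ = ⟪DAs (A x), y⟫_ℂ := (hDAssa.isSymmetric (A x) y).symm
      _ = ⟪A (DA x), y⟫_ℂ := by rw [← comp_apply DAs, ← hintertwine, comp_apply]
      _ = ⟪DA x, w⟫_ℂ := (adjoint_inner_right A (DA x) y).symm
  have hs : ‖DAs y‖ ^ 2 = ‖y‖ ^ 2 - ‖w‖ ^ 2 :=
    hDAssa.norm_sq_apply_of_comp_self_eq (by rwa [adjoint_adjoint]) y
  have hx : ‖x‖ ^ 2 = ‖A x‖ ^ 2 + ‖DA x‖ ^ 2 := by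
    linarith [hDAsa.norm_sq_apply_of_comp_self_eq hDAsq x]
  rw [hx, ← norm_sq_add_norm_sq_sub_norm_sq_eq (hy ▸ hinner) hs, hy]
  rfl

end CharacteristicFunction

/-- For a contraction `A` with defect operators `D_A = (I-A*A)^{1/2}`,
`D_{A*} = (I-AA*)^{1/2}` and defect spaces `𝔇 = clos Ran D_A`, `𝔇* = clos Ran D_{A*}`:
`A·𝔇 ⊆ 𝔇*`, and for each `z ∈ 𝔻` the resolvent `(I - zA*)⁻¹` exists and the
characteristic function `θ(z) = (-A + z D_{A*}(I - zA*)⁻¹ D_A)|_𝔇` maps `𝔇` into `𝔇*`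
contractively. -/
theorem stmt13 {H : Type*} [NormedAddCommGroup H] [InnerProductSpace ℂ H] [CompleteSpace H]
    (A : H →L[ℂ] H) (hA : ‖A‖ ≤ 1)
    (DA DAs : H →L[ℂ] H)
    (hDAsa : IsSelfAdjoint DA) (hDApos : ∀ x : H, 0 ≤ ((inner ℂ x (DA x) : ℂ)).re)
    (hDAsq : DA ∘L DA = 1 - (ContinuousLinearMap.adjoint A) ∘L A)
    (hDAssa : IsSelfAdjoint DAs) (hDAspos : ∀ x : H, 0 ≤ ((inner ℂ x (DAs x) : ℂ)).re)
    (hDAssq : DAs ∘L DAs = 1 - A ∘L (ContinuousLinearMap.adjoint A))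
    (D Ds : Submodule ℂ H)
    (hD : D = (LinearMap.range (DA : H →ₗ[ℂ] H)).topologicalClosure)
    (hDs : Ds = (LinearMap.range (DAs : H →ₗ[ℂ] H)).topologicalClosure) :
    (∀ x ∈ D, A x ∈ Ds) ∧
    ∀ z : ℂ, ‖z‖ < 1 →
      ∃ R : H →L[ℂ] H,
        ((1 - z • ContinuousLinearMap.adjoint A) ∘L R = 1 ∧
          R ∘L (1 - z • ContinuousLinearMap.adjoint A) = 1) ∧
        ∀ x ∈ D, (-A + z • (DAs ∘L R ∘L DA)) x ∈ Ds ∧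
          ‖(-A + z • (DAs ∘L R ∘L DA)) x‖ ≤ ‖x‖ := by
  have hintertwine : A ∘L DA = DAs ∘L A :=
    mul_defect_eq_defect_mul (nonneg_of_re_inner_nonneg hDAsa hDApos)
      (nonneg_of_re_inner_nonneg hDAssa hDAspos) hDAsq hDAssq
  have hmaps : ∀ x ∈ D, A x ∈ Ds := fun x hx => by
    subst hD hDs
    exact apply_mem_closure_range_of_comp_eq hintertwine hx
  refine ⟨hmaps, fun z hz => ?_⟩
  have hzA : ‖z • adjoint A‖ < 1 := by
    rw [norm_smul, LinearIsometryEquiv.norm_map]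
    nlinarith [norm_nonneg z]
  set u := Units.oneSub _ hzA
  refine ⟨↑u⁻¹, ⟨u.mul_inv, u.inv_mul⟩, fun x hx => ⟨?_, ?_⟩⟩
  · subst hDs
    exact add_mem (neg_mem (hmaps x hx)) (Submodule.smul_mem _ _
      (Submodule.le_topologicalClosure _ (LinearMap.mem_range_self _ _)))
  · have hid := norm_sq_sub_norm_sq_characteristic_apply hDAsa hDAsq hDAssa hDAssq hintertwine
      u.mul_inv x
    have hz2 : 0 ≤ 1 - ‖z‖ ^ 2 := by nlinarith [norm_nonneg z]
    refine (pow_le_pow_iff_left₀ (norm_nonneg _) (norm_nonneg _) two_ne_zero).mp (sub_nonneg.mp ?_)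
    exact hid ▸ mul_nonneg hz2 (sq_nonneg _)
end

section
/- Let θ : 𝕋 → ℂ be measurable with |θ(z)| ≤ 1 a.e., Δ := (1-|θ|²)^{1/2}, and B := {z : Δ(z) ≠ 0}. Let W_θ(z) be the 2×2 matrix [[1, θ(z)],[θ̄(z), 1]] and W_θ^{[-1]}(z) its Moore–Penrose inverse. Then, a.e. on 𝕋, [[1, θ],[0, Δ]] · W_θ^{[-1]} · [[1, 0],[θ̄, Δ]] = [[1, 0],[0, 𝟙_B]]. Consequently, for g₁, g₂ ∈ ℂ and g₂ in the closure of the range of Δ(z) (i.e. g₂ = 0 when Δ(z)=0), the vector (g₁, θ̄g₁ + Δg₂) has the same W_θ^{[-1]}-weighted norm as the Euclidean norm of (g₁, g₂): ⟨W_θ^{[-1]}(g₁, θ̄g₁+Δg₂), (g₁, θ̄g₁+Δg₂)⟩ = |g₁|² + |𝟙_B g₂|². -/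
/-!
Put `L = !![1, θ; 0, Δ]` and `R = Lᴴ = !![1, 0; conj θ, Δ]`. If `Δ ≠ 0`, then `|θ|² + Δ² = 1`,
so `R * L = W` with `R` and `L` invertible, and cancelling them in `R * L * Wi * R * L = R * L`
gives `L * Wi * R = 1`. If `Δ = 0`, then `L = E * W` and `R = W * E` with `E = !![1, 0; 0, 0]`,
so `L * Wi * R = E * W * E = E`. The norm identity is the quadratic form of this matrix identity,
since the weighted vector is `R *ᵥ ![g₁, g₂]`.
-/

open Matrix ComplexConjugate

theorem IsUnit.mul_mul_eq_one_of_mul_mul_mul_eq {M : Type*} [Monoid M] {r l x : M}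
    (hr : IsUnit r) (hl : IsUnit l) (h : r * l * x * (r * l) = r * l) : l * x * r = 1 := by
  refine hl.mul_right_cancel (hr.mul_left_cancel ?_)
  simpa only [mul_assoc, one_mul] using h

theorem star_mulVec_dotProduct_mulVec_mulVec {m n R : Type*} [Fintype m] [Fintype n]
    [CommSemiring R] [StarRing R] (A : Matrix m n R) (X : Matrix m m R) (v : n → R) :
    star (A *ᵥ v) ⬝ᵥ X *ᵥ (A *ᵥ v) = star v ⬝ᵥ (Aᴴ * X * A) *ᵥ v := by
  rw [star_mulVec, ← mulVec_mulVec, ← dotProduct_mulVec, ← mulVec_mulVec, dotProduct_mulVec]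

theorem sandwich_innerInverse_of_defect_ne_zero {θ δ : ℂ} (hδ : δ ≠ 0)
    (hθδ : conj θ * θ + δ ^ 2 = 1) {X : Matrix (Fin 2) (Fin 2) ℂ}
    (hX : !![1, θ; conj θ, 1] * X * !![1, θ; conj θ, 1] = !![1, θ; conj θ, 1]) :
    !![1, θ; 0, δ] * X * !![1, 0; conj θ, δ] = 1 := by
  have hfactor : !![1, 0; conj θ, δ] * !![1, θ; 0, δ] = !![1, θ; conj θ, 1] := by
    simp [← sq, hθδ]
  have hunit : ∀ M : Matrix (Fin 2) (Fin 2) ℂ, M.det = δ → IsUnit M := fun M hM =>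
    (isUnit_iff_isUnit_det M).mpr (hM ▸ hδ.isUnit)
  refine IsUnit.mul_mul_eq_one_of_mul_mul_mul_eq (hunit _ ?_) (hunit _ ?_) (hfactor ▸ hX) <;>
    simp [det_fin_two]

theorem sandwich_innerInverse_of_defect_eq_zero {θ : ℂ} {X : Matrix (Fin 2) (Fin 2) ℂ}
    (hX : !![1, θ; conj θ, 1] * X * !![1, θ; conj θ, 1] = !![1, θ; conj θ, 1]) :
    !![1, θ; 0, 0] * X * !![1, 0; conj θ, 0] = !![1, 0; 0, 0] := by
  set E : Matrix (Fin 2) (Fin 2) ℂ := !![1, 0; 0, 0]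
  have hleft : !![1, θ; 0, 0] = E * !![1, θ; conj θ, 1] := by
    ext i j; fin_cases i <;> fin_cases j <;> simp [E]
  have hright : !![1, 0; conj θ, 0] = !![1, θ; conj θ, 1] * E := by
    ext i j; fin_cases i <;> fin_cases j <;> simp [E]
  calc !![1, θ; 0, 0] * X * !![1, 0; conj θ, 0]
      = E * (!![1, θ; conj θ, 1] * X * !![1, θ; conj θ, 1]) * E := by
        rw [hleft, hright]; simp only [mul_assoc]
    _ = E := by
        rw [hX]; ext i j; fin_cases i <;> fin_cases j <;> simp [E]

theorem stmt16_general (θ : ℂ)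
    (Δ : ℝ) (hΔ : Δ = Real.sqrt (1 - ‖θ‖ ^ 2))
    (W Wi : Matrix (Fin 2) (Fin 2) ℂ)
    (hW : W = !![1, θ; conj θ, 1])
    (hP1 : W * Wi * W = W) :
    !![1, θ; 0, (Δ : ℂ)] * Wi * !![1, 0; conj θ, (Δ : ℂ)] =
      !![1, 0; 0, if Δ ≠ 0 then 1 else 0] ∧
    ∀ g₁ g₂ : ℂ, (Δ = 0 → g₂ = 0) →
      star (![g₁, conj θ * g₁ + (Δ : ℂ) * g₂]) ⬝ᵥ
          Wi.mulVec ![g₁, conj θ * g₁ + (Δ : ℂ) * g₂] =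
        ((‖g₁‖ ^ 2 + ‖(if Δ ≠ 0 then g₂ else 0)‖ ^ 2 : ℝ) : ℂ) := by
  subst hW
  have hsandwich : !![1, θ; 0, (Δ : ℂ)] * Wi * !![1, 0; conj θ, (Δ : ℂ)] =
      !![1, 0; 0, if Δ ≠ 0 then 1 else 0] := by
    rcases eq_or_ne Δ 0 with hΔ0 | hΔ0
    · simpa [hΔ0] using sandwich_innerInverse_of_defect_eq_zero hP1
    · have hθΔ : conj θ * θ + (Δ : ℂ) ^ 2 = 1 := by
        have hpos : 0 < 1 - ‖θ‖ ^ 2 := Real.sqrt_ne_zero'.mp (hΔ ▸ hΔ0)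
        have hsq : ‖θ‖ ^ 2 + Δ ^ 2 = 1 := by rw [hΔ, Real.sq_sqrt hpos.le]; ring
        rw [Complex.conj_mul']
        exact_mod_cast hsq
      rw [sandwich_innerInverse_of_defect_ne_zero (by exact_mod_cast hΔ0) hθΔ hP1, if_pos hΔ0]
      exact one_fin_two
  refine ⟨hsandwich, fun g₁ g₂ _ => ?_⟩
  have hvec : ![g₁, conj θ * g₁ + (Δ : ℂ) * g₂] = !![1, 0; conj θ, (Δ : ℂ)] *ᵥ ![g₁, g₂] := by
    ext i; fin_cases i <;> simp [mulVec, dotProduct]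
  have hadj : (!![1, 0; conj θ, (Δ : ℂ)])ᴴ = !![1, θ; 0, (Δ : ℂ)] := by
    ext i j; fin_cases i <;> fin_cases j <;> simp
  rw [hvec, star_mulVec_dotProduct_mulVec_mulVec, hadj, hsandwich]
  split_ifs <;> simp [Complex.conj_mul', dotProduct]

/-- Pointwise identity between the de Branges–Rovnyak weight `W_θ^{[-1]}` (Moore–Penrose
inverse, characterized by the four Penrose equations) and the Sz.-Nagy–Foiaş norm:
`[[1,θ],[0,Δ]]·W_θ^{[-1]}·[[1,0],[θ̄,Δ]] = [[1,0],[0,𝟙_B]]` with `B = {Δ ≠ 0}`, and the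
weighted norm of `(g₁, θ̄g₁ + Δg₂)` equals `|g₁|² + |𝟙_B g₂|²`. -/
theorem stmt16 (θ : ℂ) (hθ : ‖θ‖ ≤ 1)
    (Δ : ℝ) (hΔ : Δ = Real.sqrt (1 - ‖θ‖ ^ 2))
    (W Wi : Matrix (Fin 2) (Fin 2) ℂ)
    (hW : W = !![1, θ; conj θ, 1])
    (hP1 : W * Wi * W = W) (hP2 : Wi * W * Wi = Wi)
    (hP3 : (W * Wi)ᴴ = W * Wi) (hP4 : (Wi * W)ᴴ = Wi * W) :
    !![1, θ; 0, (Δ : ℂ)] * Wi * !![1, 0; conj θ, (Δ : ℂ)] =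
      !![1, 0; 0, if Δ ≠ 0 then 1 else 0] ∧
    ∀ g₁ g₂ : ℂ, (Δ = 0 → g₂ = 0) →
      star (![g₁, conj θ * g₁ + (Δ : ℂ) * g₂]) ⬝ᵥ
          Wi.mulVec ![g₁, conj θ * g₁ + (Δ : ℂ) * g₂] =
        ((‖g₁‖ ^ 2 + ‖(if Δ ≠ 0 then g₂ else 0)‖ ^ 2 : ℝ) : ℂ) :=
  stmt16_general θ Δ hΔ W Wi hW hP1
end
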